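/- Let s < 0 and ε > 0. Then there exists a constant C > 0 (depending only on s and ε) such that for all sequences a, b : ℤ → ℂ, the sequence I(k) := Σ_{k'∈ℤ, k'≠0, |k'| ≥ 2|k|} (⟨k⟩^s − ⟨k'⟩^s) · (i k') · a(k−k') · b(k') satisfies ‖I‖_{ℓ²} ≤ C ‖a‖_{ℓ²_{3/2+ε}} ‖b‖_{ℓ²}. -/

import Mathlib

open scoped ENNReal
open MeasureTheory

/-- Japanese bracket `⟨k⟩ = (1 + k²)^(1/2)` for an integer `k`. -/
noncomputable def jb (k : ℤ) : ℝ := Real.sqrt (1 + (k : ℝ) ^ 2)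

/-- Weighted `ℓ²_s` norm of a sequence `a : ℤ → ℂ`, valued in `[0,∞]`. -/
noncomputable def l2 (s : ℝ) (a : ℤ → ℂ) : ℝ≥0∞ :=
  (∑' k : ℤ, ENNReal.ofReal (jb k ^ (2 * s) * ‖a k‖ ^ 2)) ^ (1 / 2 : ℝ)



lemma jb_aux_one_le (k : ℤ) : 1 ≤ Real.sqrt (1 + (k : ℝ) ^ 2) := by
  have h := Real.sqrt_le_sqrt (show (1:ℝ) ≤ 1 + (k:ℝ)^2 by nlinarith [sq_nonneg ((k:ℝ))])
  simpa using h

lemma jb_aux_abs_le (k : ℤ) : |(k : ℝ)| ≤ Real.sqrt (1 + (k : ℝ) ^ 2) := by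
  rw [← Real.sqrt_sq_eq_abs]
  exact Real.sqrt_le_sqrt (by nlinarith)

lemma ennnorm_tsum_le {ι : Type*} (f : ι → ℂ) :
    (‖∑' i, f i‖₊ : ℝ≥0∞) ≤ ∑' i, (‖f i‖₊ : ℝ≥0∞) := by
  by_cases h : Summable fun i => ‖f i‖₊
  · rw [← ENNReal.coe_tsum h]
    exact_mod_cast nnnorm_tsum_le h
  · have : (∑' i, (‖f i‖₊ : ℝ≥0∞)) = ∞ := by
      simpa using (not_iff_not.mpr ENNReal.tsum_coe_ne_top_iff_summable).mpr h
    simp [this]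

lemma cs_tsum (f g : ℤ → ℝ≥0∞) :
    ∑' m, f m * g m ≤
      (∑' m, f m ^ (2:ℝ)) ^ (1/2:ℝ) * (∑' m, g m ^ (2:ℝ)) ^ (1/2:ℝ) := by
  have hpq : Real.HolderConjugate 2 2 := Real.HolderConjugate.two_two
  have h := ENNReal.lintegral_mul_le_Lp_mul_Lq (Measure.count : Measure ℤ) hpq
    (f := f) (g := g) (Measurable.of_discrete).aemeasurable (Measurable.of_discrete).aemeasurable
  simpa [lintegral_count] using h

lemma sq_rpow_ennreal (x : ℝ≥0∞) : x ^ (2:ℝ) = x * x := by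
  rw [show (2:ℝ) = ((2:ℕ):ℝ) by norm_num, ENNReal.rpow_natCast]; ring

lemma half_sq_ennreal (x : ℝ≥0∞) : (x ^ (1/2:ℝ)) ^ (2:ℝ) = x := by
  rw [← ENNReal.rpow_mul]; norm_num

lemma sq_half_ennreal (x : ℝ≥0∞) : (x ^ (2:ℝ)) ^ (1/2:ℝ) = x := by
  rw [← ENNReal.rpow_mul]; norm_num

lemma schur_tsum (c B : ℤ → ℝ≥0∞) :
    (∑' k : ℤ, (∑' m : ℤ, c (k - m) * B m) ^ (2:ℝ)) ^ (1/2:ℝ) ≤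
      (∑' m, c m) * (∑' m, B m ^ (2:ℝ)) ^ (1/2:ℝ) := by
  set S := ∑' m, c m with hS
  have trans : ∀ k : ℤ, ∑' m, c (k - m) = S := fun k => by
    simpa using (Equiv.subLeft k).tsum_eq c
  have trans' : ∀ m : ℤ, ∑' k, c (k - m) = S := fun m => by
    simpa using (Equiv.subRight m).tsum_eq c
  have key : ∀ k : ℤ, (∑' m, c (k-m) * B m) ^ (2:ℝ) ≤ S * ∑' m, c (k-m) * B m ^ (2:ℝ) := by
    intro k
    have h1 : ∑' m, c (k-m) * B m ≤
        (∑' m, c (k-m)) ^ (1/2:ℝ) * (∑' m, c (k-m) * B m ^ (2:ℝ)) ^ (1/2:ℝ) := by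
      have h := cs_tsum (fun m => c (k-m) ^ (1/2:ℝ)) (fun m => c (k-m) ^ (1/2:ℝ) * B m)
      have e1 : ∀ m : ℤ, c (k-m) ^ (1/2:ℝ) * (c (k-m) ^ (1/2:ℝ) * B m) = c (k-m) * B m := by
        intro m
        rw [← mul_assoc, ← sq_rpow_ennreal, half_sq_ennreal]
      have e2 : ∀ m : ℤ, (c (k-m) ^ (1/2:ℝ)) ^ (2:ℝ) = c (k-m) := fun m => half_sq_ennreal _
      have e3 : ∀ m : ℤ, (c (k-m) ^ (1/2:ℝ) * B m) ^ (2:ℝ) = c (k-m) * B m ^ (2:ℝ) := by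
        intro m
        rw [ENNReal.mul_rpow_of_nonneg _ _ (by norm_num), half_sq_ennreal]
      calc ∑' m, c (k-m) * B m = ∑' m, c (k-m) ^ (1/2:ℝ) * (c (k-m) ^ (1/2:ℝ) * B m) :=
            (tsum_congr e1).symm
        _ ≤ (∑' m, (c (k-m) ^ (1/2:ℝ)) ^ (2:ℝ)) ^ (1/2:ℝ) *
            (∑' m, (c (k-m) ^ (1/2:ℝ) * B m) ^ (2:ℝ)) ^ (1/2:ℝ) := h
        _ = _ := by rw [tsum_congr e2, tsum_congr e3]
    calc (∑' m, c (k-m) * B m) ^ (2:ℝ)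
        ≤ ((∑' m, c (k-m)) ^ (1/2:ℝ) * (∑' m, c (k-m) * B m ^ (2:ℝ)) ^ (1/2:ℝ)) ^ (2:ℝ) :=
          ENNReal.rpow_le_rpow h1 (by norm_num)
      _ = (∑' m, c (k-m)) * (∑' m, c (k-m) * B m ^ (2:ℝ)) := by
          rw [ENNReal.mul_rpow_of_nonneg _ _ (by norm_num), half_sq_ennreal, half_sq_ennreal]
      _ = S * ∑' m, c (k-m) * B m ^ (2:ℝ) := by rw [trans]
  calc (∑' k : ℤ, (∑' m : ℤ, c (k - m) * B m) ^ (2:ℝ)) ^ (1/2:ℝ)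
      ≤ (∑' k : ℤ, S * ∑' m, c (k-m) * B m ^ (2:ℝ)) ^ (1/2:ℝ) :=
        ENNReal.rpow_le_rpow (ENNReal.tsum_le_tsum key) (by norm_num)
    _ = (S * (S * ∑' m, B m ^ (2:ℝ))) ^ (1/2:ℝ) := by
        rw [ENNReal.tsum_mul_left]
        congr 2
        rw [ENNReal.tsum_comm]
        calc ∑' m, ∑' k, c (k-m) * B m ^ (2:ℝ)
            = ∑' m : ℤ, S * B m ^ (2:ℝ) := by
              refine tsum_congr fun m => ?_
              rw [ENNReal.tsum_mul_right, trans']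
          _ = S * ∑' m, B m ^ (2:ℝ) := ENNReal.tsum_mul_left
    _ = (S * S) ^ (1/2:ℝ) * (∑' m, B m ^ (2:ℝ)) ^ (1/2:ℝ) := by
        rw [← mul_assoc, ENNReal.mul_rpow_of_nonneg _ _ (by norm_num)]
    _ = S * (∑' m, B m ^ (2:ℝ)) ^ (1/2:ℝ) := by
        rw [← sq_rpow_ennreal, sq_half_ennreal]

lemma jb_one_le (k : ℤ) : 1 ≤ jb k := jb_aux_one_le k
lemma jb_pos (k : ℤ) : 0 < jb k := lt_of_lt_of_le one_pos (jb_one_le k)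
lemma jb_abs_le (k : ℤ) : |(k:ℝ)| ≤ jb k := jb_aux_abs_le k

lemma jb_summable {b : ℝ} (hb : 1 < b) :
    Summable (fun m : ℤ => jb m ^ (-b)) := by
  have h1 : Summable (fun m : ℤ => |(m:ℝ)| ^ (-b)) := Real.summable_abs_int_rpow hb
  have h2 : Summable (fun m : ℤ => if m = 0 then (1:ℝ) else 0) := by
    apply summable_of_ne_finset_zero (s := ({0} : Finset ℤ))
    intro m hm
    simp only [Finset.mem_singleton] at hm
    simp [hm]
  refine Summable.of_nonneg_of_le (fun m => Real.rpow_nonneg (jb_pos m).le _) (fun m => ?_) (h1.add h2)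
  by_cases hm : m = 0
  · subst hm
    have : jb (0:ℤ) = 1 := by simp [jb]
    rw [this]
    norm_num [Real.zero_rpow (show -b ≠ 0 by linarith), Real.one_rpow]
  · have hpos : (0:ℝ) < |(m:ℝ)| := by
      simp only [abs_pos, Int.cast_ne_zero]; exact hm
    have h := Real.rpow_le_rpow_of_nonpos hpos (jb_abs_le m) (by linarith : -b ≤ 0)
    have hnn : (0:ℝ) ≤ jb m ^ (-b) := Real.rpow_nonneg (jb_pos m).le _
    simp only [Pi.add_apply, if_neg hm, add_zero]
    exact h

lemma ofReal_sq (x : ℝ) (hx : 0 ≤ x) :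
    ENNReal.ofReal (x ^ 2) = ENNReal.ofReal x ^ (2:ℝ) := by
  rw [sq, ENNReal.ofReal_mul hx, sq_rpow_ennreal]

/-- High-output-frequency piece (region `|k'| ≥ 2|k|`) of the commutator, negative
regularity `s < 0`: `‖I‖_{ℓ²} ≤ C ‖a‖_{ℓ²_{3/2+ε}} ‖b‖_{ℓ²}`. -/
theorem commutator_high_piece_neg (s ε : ℝ) (hs : s < 0) (hε : 0 < ε) :
    ∃ C : ℝ, 0 < C ∧ ∀ a b : ℤ → ℂ,
      l2 0 (fun k => ∑' k' : {m : ℤ // m ≠ 0 ∧ 2 * |k| ≤ |m|},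
          Complex.ofReal (jb k ^ s - jb k'.1 ^ s) * (Complex.I * (k'.1 : ℂ)) *
            a (k - k'.1) * b k'.1)
        ≤ ENNReal.ofReal C * (l2 (3 / 2 + ε) a * l2 0 b) := by
  have hb : (1:ℝ) < 1 + 2*ε := by linarith
  have hsum : Summable (fun m : ℤ => jb m ^ (-(1+2*ε))) := jb_summable hb
  set Sr : ℝ := ∑' m : ℤ, jb m ^ (-(1+2*ε)) with hSr
  have hSrnn : ∀ m : ℤ, 0 ≤ jb m ^ (-(1+2*ε)) := fun m => Real.rpow_nonneg (jb_pos m).le _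
  have hSrpos : 0 < Sr := by
    refine Summable.tsum_pos hsum hSrnn 0 ?_
    have : jb (0:ℤ) = 1 := by simp [jb]
    rw [this, Real.one_rpow]
    norm_num
  have hCpos : (0:ℝ) < 4 * Sr ^ (1/2:ℝ) :=
    mul_pos (by norm_num) (Real.rpow_pos_of_pos hSrpos _)
  refine ⟨4 * Sr ^ (1/2:ℝ), hCpos, fun a b => ?_⟩
  set F : ℤ → ℂ := fun k => ∑' k' : {m : ℤ // m ≠ 0 ∧ 2 * |k| ≤ |m|},
      Complex.ofReal (jb k ^ s - jb k'.1 ^ s) * (Complex.I * (k'.1 : ℂ)) *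
        a (k - k'.1) * b k'.1 with hF
  set c : ℤ → ℝ≥0∞ := fun m => ENNReal.ofReal (4 * jb m * ‖a m‖) with hc
  set B : ℤ → ℝ≥0∞ := fun m => ENNReal.ofReal ‖b m‖ with hB
  -- pointwise bound
  have hpt : ∀ k : ℤ, (‖F k‖₊ : ℝ≥0∞) ≤ ∑' m : ℤ, c (k - m) * B m := by
    intro k
    refine le_trans (ennnorm_tsum_le _) (le_trans (ENNReal.tsum_le_tsum fun k' => ?_)
      (ENNReal.tsum_comp_le_tsum_of_injective Subtype.val_injective (fun m => c (k - m) * B m)))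
    obtain ⟨k', hk0, hk2⟩ := k'
    -- real-norm bound on the term
    have hreal : ‖Complex.ofReal (jb k ^ s - jb k' ^ s) * (Complex.I * (k' : ℂ)) *
        a (k - k') * b k'‖ ≤ (4 * jb (k - k') * ‖a (k - k')‖) * ‖b k'‖ := by
      have h2k : |(k':ℝ)| ≤ 2 * jb (k - k') := by
        have h1 : 2 * |(k:ℝ)| ≤ |(k':ℝ)| := by exact_mod_cast hk2
        have h2 : |(k':ℝ)| - |(k:ℝ)| ≤ |(k:ℝ) - (k':ℝ)| := by
          have := abs_sub_abs_le_abs_sub ((k':ℝ)) ((k:ℝ))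
          rw [abs_sub_comm] at this
          linarith
        have h3 : |(k:ℝ) - (k':ℝ)| ≤ jb (k - k') := by
          have := jb_abs_le (k - k')
          push_cast at this
          exact this
        linarith
      have hr : |jb k ^ s - jb k' ^ s| ≤ 2 := by
        have e1 : jb k ^ s ≤ 1 :=
          Real.rpow_le_one_of_one_le_of_nonpos (jb_one_le k) hs.le
        have e2 : jb k' ^ s ≤ 1 :=
          Real.rpow_le_one_of_one_le_of_nonpos (jb_one_le k') hs.le
        have e3 : 0 ≤ jb k ^ s := Real.rpow_nonneg (jb_pos k).le _
        have e4 : 0 ≤ jb k' ^ s := Real.rpow_nonneg (jb_pos k').le _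
        rw [abs_le]; constructor <;> linarith
      have hnormeq : ‖Complex.ofReal (jb k ^ s - jb k' ^ s) * (Complex.I * (k' : ℂ)) *
          a (k - k') * b k'‖ = |jb k ^ s - jb k' ^ s| * |(k':ℝ)| * ‖a (k - k')‖ * ‖b k'‖ := by
        simp [norm_mul, Complex.norm_real, Complex.norm_I, ← Complex.ofReal_sub]
      rw [hnormeq]
      have hnn1 : (0:ℝ) ≤ |(k':ℝ)| := abs_nonneg _
      have hnn2 : (0:ℝ) ≤ ‖a (k - k')‖ := norm_nonneg _
      have hnn3 : (0:ℝ) ≤ ‖b k'‖ := norm_nonneg _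
      have habs : (0:ℝ) ≤ |jb k ^ s - jb k' ^ s| := abs_nonneg _
      have hjb : (0:ℝ) ≤ jb (k - k') := (jb_pos _).le
      calc |jb k ^ s - jb k' ^ s| * |(k':ℝ)| * ‖a (k - k')‖ * ‖b k'‖
          ≤ 2 * (2 * jb (k - k')) * ‖a (k - k')‖ * ‖b k'‖ := by
            gcongr
        _ = (4 * jb (k - k') * ‖a (k - k')‖) * ‖b k'‖ := by ring
    -- move to ℝ≥0∞
    calc (‖Complex.ofReal (jb k ^ s - jb k' ^ s) * (Complex.I * (k' : ℂ)) *
            a (k - k') * b k'‖₊ : ℝ≥0∞)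
        = ENNReal.ofReal ‖Complex.ofReal (jb k ^ s - jb k' ^ s) * (Complex.I * (k' : ℂ)) *
            a (k - k') * b k'‖ := (ofReal_norm _).symm
      _ ≤ ENNReal.ofReal ((4 * jb (k - k') * ‖a (k - k')‖) * ‖b k'‖) :=
          ENNReal.ofReal_le_ofReal hreal
      _ = c (k - k') * B k' := by
          rw [ENNReal.ofReal_mul
            (mul_nonneg (mul_nonneg (by norm_num) (jb_pos (k - k')).le) (norm_nonneg _))]
  -- identification of the LHS
  have lhs_eq : l2 0 F = (∑' k : ℤ, ((‖F k‖₊ : ℝ≥0∞)) ^ (2:ℝ)) ^ (1/2:ℝ) := by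
    unfold l2
    congr 1
    refine tsum_congr fun k => ?_
    rw [mul_zero, Real.rpow_zero, one_mul, ofReal_sq _ (norm_nonneg _),
      ofReal_norm, enorm_eq_nnnorm]
  have rhsb_eq : (∑' m : ℤ, B m ^ (2:ℝ)) ^ (1/2:ℝ) = l2 0 b := by
    unfold l2
    congr 1
    refine tsum_congr fun m => ?_
    rw [mul_zero, Real.rpow_zero, one_mul, ofReal_sq _ (norm_nonneg _), hB]
  -- bound on ∑ c
  have h4 : ∑' m : ℤ, c m ≤ ENNReal.ofReal (4 * Sr ^ (1/2:ℝ)) * l2 (3/2+ε) a := by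
    set f : ℤ → ℝ≥0∞ := fun m => ENNReal.ofReal (jb m ^ (-(1/2+ε))) with hf
    set g : ℤ → ℝ≥0∞ := fun m => ENNReal.ofReal (jb m ^ (3/2+ε) * ‖a m‖) with hg
    have hsplit : ∀ m : ℤ, c m = ENNReal.ofReal 4 * (f m * g m) := by
      intro m
      have hjb : 0 < jb m := jb_pos m
      rw [hc, hf, hg, ← ENNReal.ofReal_mul (Real.rpow_nonneg hjb.le _),
        ← ENNReal.ofReal_mul (by norm_num)]
      congr 1
      rw [show jb m ^ (-(1/2+ε)) * (jb m ^ (3/2+ε) * ‖a m‖)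
            = (jb m ^ (-(1/2+ε)) * jb m ^ (3/2+ε)) * ‖a m‖ by ring,
        ← Real.rpow_add hjb, show -(1/2+ε) + (3/2+ε) = (1:ℝ) by ring, Real.rpow_one]
      ring
    have hf2 : ∀ m : ℤ, f m ^ (2:ℝ) = ENNReal.ofReal (jb m ^ (-(1+2*ε))) := by
      intro m
      have h1 : (jb m ^ (-(1/2+ε))) ^ (2:ℝ) = jb m ^ (-(1+2*ε)) := by
        rw [← Real.rpow_mul (jb_pos m).le]
        congr 1
        ring
      rw [hf, ENNReal.ofReal_rpow_of_nonneg (Real.rpow_nonneg (jb_pos m).le _)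
        (by norm_num : (0:ℝ) ≤ 2), h1]
    have hg2 : ∀ m : ℤ, g m ^ (2:ℝ) = ENNReal.ofReal (jb m ^ (2*(3/2+ε)) * ‖a m‖ ^ 2) := by
      intro m
      have hexp : ((3:ℝ)/2+ε) * ((2:ℕ):ℝ) = 2*(3/2+ε) := by push_cast; ring
      rw [hg, ← ofReal_sq _ (mul_nonneg (Real.rpow_nonneg (jb_pos m).le _) (norm_nonneg _))]
      congr 1
      rw [mul_pow, ← Real.rpow_natCast (jb m ^ (3/2+ε)) 2, ← Real.rpow_mul (jb_pos m).le,
        hexp]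
    have hfS : (∑' m : ℤ, f m ^ (2:ℝ)) ^ (1/2:ℝ) = ENNReal.ofReal (Sr ^ (1/2:ℝ)) := by
      rw [tsum_congr hf2, ← ENNReal.ofReal_tsum_of_nonneg hSrnn hsum, ← hSr,
        ENNReal.ofReal_rpow_of_nonneg hSrpos.le (by norm_num)]
    have hgS : (∑' m : ℤ, g m ^ (2:ℝ)) ^ (1/2:ℝ) = l2 (3/2+ε) a := by
      unfold l2
      rw [tsum_congr hg2]
    calc ∑' m : ℤ, c m = ENNReal.ofReal 4 * ∑' m : ℤ, f m * g m := by
          rw [← ENNReal.tsum_mul_left]; exact tsum_congr hsplit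
      _ ≤ ENNReal.ofReal 4 * ((∑' m, f m ^ (2:ℝ)) ^ (1/2:ℝ) * (∑' m, g m ^ (2:ℝ)) ^ (1/2:ℝ)) :=
          mul_le_mul_right (cs_tsum f g) _
      _ = ENNReal.ofReal (4 * Sr ^ (1/2:ℝ)) * l2 (3/2+ε) a := by
          rw [hfS, hgS, ENNReal.ofReal_mul (by norm_num), mul_assoc]
  -- final chain
  calc l2 0 F = (∑' k : ℤ, ((‖F k‖₊ : ℝ≥0∞)) ^ (2:ℝ)) ^ (1/2:ℝ) := lhs_eq
    _ ≤ (∑' k : ℤ, (∑' m : ℤ, c (k - m) * B m) ^ (2:ℝ)) ^ (1/2:ℝ) :=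
        ENNReal.rpow_le_rpow (ENNReal.tsum_le_tsum fun k =>
          ENNReal.rpow_le_rpow (hpt k) (by norm_num)) (by norm_num)
    _ ≤ (∑' m : ℤ, c m) * (∑' m : ℤ, B m ^ (2:ℝ)) ^ (1/2:ℝ) := schur_tsum c B
    _ = (∑' m : ℤ, c m) * l2 0 b := by rw [rhsb_eq]
    _ ≤ (ENNReal.ofReal (4 * Sr ^ (1/2:ℝ)) * l2 (3/2+ε) a) * l2 0 b :=
        mul_le_mul_left h4 _
    _ = ENNReal.ofReal (4 * Sr ^ (1/2:ℝ)) * (l2 (3/2+ε) a * l2 0 b) := mul_assoc _ _ _
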